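/- arXiv:1012.3892 — 6 statements merged into one kernel-verified Lean document; each statement's English description precedes it below -/
import Mathlib

section
/- Fix a positive integer r and let b_i = binom(i+r-1, i) for all positive integers i. Then for every positive integer n, the number of r-matrix compositions of n equals C^b(n). -/
open Finset

/-- The number of generalized compositions of `n` with `k` parts, where the part `i`
comes in `b i` types: the sum over all `k`-tuples of positive integers summing to `n`
of the product of the `b`-values of the parts. -/
def genComp (b : ℕ → ℕ) (n k : ℕ) : ℕ :=
  ∑ f ∈ (Finset.Nat.antidiagonalTuple k n).filter (fun f => ∀ j, 0 < f j),
    ∏ j, b (f j)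

/-- The total number of generalized compositions of `n` (with any number of parts). -/
def genCompAll (b : ℕ → ℕ) (n : ℕ) : ℕ :=
  ∑ k ∈ Finset.range (n + 1), genComp b n k

/-!
Recording the column sums of a matrix composition turns it into a composition of `n` in which a
part `i` is decorated by a vector of `ℕ^r` with entry sum `i`; by stars and bars there are
`binom(i + r - 1, i)` such vectors. This is an instance of a general principle: sequences of
objects of positive weights summing to `n` are counted by `C^b(n)`, where `b_i` is the number of
objects of weight `i`.
-/

theorem Finset.Nat.card_antidiagonalTuple (k n : ℕ) :
    #(Nat.antidiagonalTuple k n) = (k + n - 1).choose n := by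
  rw [card_eq_of_equiv_fintype ((Equiv.subtypeEquivRight fun _ => Nat.mem_antidiagonalTuple).trans
    (Sym.equivNatSumOfFintype (Fin k) n).symm), Sym.card_sym_eq_choose, Fintype.card_fin]

section WeightedTuples

variable {α : Type*} [DecidableEq α] {w : α → ℕ} (A : ℕ → Finset α)

def weightedTuples (k n : ℕ) : Finset (Fin k → α) :=
  {f ∈ Nat.antidiagonalTuple k n | ∀ j, 0 < f j}.biUnion fun f =>
    Fintype.piFinset fun j => A (f j)

variable {A} (hA : ∀ m x, x ∈ A m ↔ w x = m)
include hA

theorem mem_weightedTuples {k n : ℕ} {x : Fin k → α} :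
    x ∈ weightedTuples A k n ↔ (∀ j, 0 < w (x j)) ∧ ∑ j, w (x j) = n := by
  simp only [weightedTuples, mem_biUnion, mem_filter, Nat.mem_antidiagonalTuple,
    Fintype.mem_piFinset, hA]
  constructor
  · rintro ⟨f, ⟨hsum, hpos⟩, hf⟩
    obtain rfl : (fun j => w (x j)) = f := funext hf
    exact ⟨hpos, hsum⟩
  · rintro ⟨hpos, hsum⟩
    exact ⟨fun j => w (x j), ⟨hsum, hpos⟩, fun _ => rfl⟩

theorem card_weightedTuples {b : ℕ → ℕ} (hb : ∀ m, 0 < m → b m = #(A m)) (k n : ℕ) :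
    #(weightedTuples A k n) = genComp b n k := by
  rw [weightedTuples, card_biUnion]
  · refine sum_congr rfl fun f hf => ?_
    rw [Fintype.card_piFinset]
    exact prod_congr rfl fun j _ => (hb _ ((mem_filter.mp hf).2 j)).symm
  · intro f _ g _ hfg
    refine disjoint_left.mpr fun x hxf hxg => hfg ?_
    simp only [Fintype.mem_piFinset, hA] at hxf hxg
    exact funext fun j => (hxf j).symm.trans (hxg j)

theorem length_le_of_mem_weightedTuples {k n : ℕ} {x : Fin k → α}
    (hx : x ∈ weightedTuples A k n) : k ≤ n := by
  obtain ⟨hpos, hsum⟩ := (mem_weightedTuples hA).mp hx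
  simpa [← hsum] using card_nsmul_le_sum univ (fun j => w (x j)) 1 fun j _ => hpos j

theorem ncard_weightedLists {b : ℕ → ℕ} (hb : ∀ m, 0 < m → b m = #(A m)) (n : ℕ) :
    {l : List α | (∀ x ∈ l, 0 < w x) ∧ (l.map w).sum = n}.ncard = genCompAll b n := by
  have hset : {l : List α | (∀ x ∈ l, 0 < w x) ∧ (l.map w).sum = n} =
      ((range (n + 1)).sigma fun k => weightedTuples A k n).map
        List.equivSigmaTuple.symm.toEmbedding := by
    ext l
    obtain ⟨k, x, rfl⟩ : ∃ k, ∃ x : Fin k → α, List.ofFn x = l :=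
      ⟨_, _, List.ofFn_get l⟩
    simp only [Set.mem_ofPred_eq, List.forall_mem_ofFn_iff, List.map_ofFn, List.sum_ofFn,
      coe_map, Set.mem_image, mem_coe, mem_sigma, mem_range, Sigma.exists]
    constructor
    · rintro ⟨hpos, hsum⟩
      have hx : x ∈ weightedTuples A k n := (mem_weightedTuples hA).mpr ⟨hpos, hsum⟩
      exact ⟨k, x, ⟨Nat.lt_succ_of_le (length_le_of_mem_weightedTuples hA hx), hx⟩, rfl⟩
    · rintro ⟨k', y, ⟨-, hy⟩, hyx⟩
      cases List.ofFn_inj'.mp hyx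
      exact (mem_weightedTuples hA).mp hy
  rw [hset, Set.ncard_coe_finset, card_map, card_sigma, genCompAll]
  exact sum_congr rfl fun k _ => card_weightedTuples hA hb k n

end WeightedTuples

theorem matrixComposition_count_general (r : ℕ) (b : ℕ → ℕ)
    (hb : ∀ i, 1 ≤ i → b i = Nat.choose (i + r - 1) i) (n : ℕ) :
    {l : List (Fin r → ℕ) | (∀ v ∈ l, v ≠ 0) ∧
      (l.map (fun v => ∑ j, v j)).sum = n}.ncard = genCompAll b n := by
  have hne (v : Fin r → ℕ) : v ≠ 0 ↔ 0 < ∑ j, v j := by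
    simp [Nat.pos_iff_ne_zero, sum_eq_zero_iff, funext_iff]
  simp_rw [hne]
  refine ncard_weightedLists (A := Nat.antidiagonalTuple r) (fun _ _ => Nat.mem_antidiagonalTuple)
    (fun m hm => ?_) n
  rw [hb m hm, Nat.card_antidiagonalTuple, add_comm]

theorem matrixComposition_count (r : ℕ) (hr : 1 ≤ r) (b : ℕ → ℕ)
    (hb : ∀ i, 1 ≤ i → b i = Nat.choose (i + r - 1) i) (n : ℕ) (hn : 1 ≤ n) :
    {l : List (Fin r → ℕ) | (∀ v ∈ l, v ≠ 0) ∧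
      (l.map (fun v => ∑ j, v j)).sum = n}.ncard = genCompAll b n :=
  matrixComposition_count_general r b hb n
end

section
/- Let p be a positive integer and let b_i = p^{i-1} for all positive integers i. Then for every positive integer n, C^b(n) = (1+p)^{n-1}. -/
open Finset

/-!
Splitting off the first part of a composition gives the recursion
`C(n + 1) = ∑_{i + j = n} b_{i+1} C(j)`. When `b_{i+2} = p b_{i+1}`, the terms of the recursion
for `C(n + 2)` with first part at least `2` add up to `p C(n + 1)`, so
`C(n + 2) = (b_1 + p) C(n + 1)` and hence `C(n + 1) = b_1 (b_1 + p)^n`.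
-/

theorem Finset.Nat.sum_antidiagonalTuple_succ {M : Type*} [AddCommMonoid M] (k n : ℕ)
    (F : (Fin (k + 1) → ℕ) → M) :
    ∑ f ∈ Nat.antidiagonalTuple (k + 1) n, F f =
      ∑ ij ∈ antidiagonal n, ∑ g ∈ Nat.antidiagonalTuple k ij.2, F (Fin.cons ij.1 g) := by
  rw [sum_sigma']
  refine sum_nbij' (fun f => ⟨(f 0, n - f 0), Fin.tail f⟩) (fun x => Fin.cons x.1.1 x.2)
    ?_ ?_ (fun f _ => Fin.cons_self_tail f) ?_ (fun f _ => by rw [Fin.cons_self_tail])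
  · intro f hf
    simp only [Nat.mem_antidiagonalTuple, Fin.sum_univ_succ] at hf
    simp [Nat.mem_antidiagonalTuple, Fin.tail, ← hf]
  · rintro ⟨⟨i, j⟩, g⟩ h
    simp_all [Nat.mem_antidiagonalTuple, Fin.sum_univ_succ]
  · rintro ⟨⟨i, j⟩, g⟩ h
    simp only [mem_sigma, HasAntidiagonal.mem_antidiagonal] at h
    simp [← h.1]

section

variable (b : ℕ → ℕ)

theorem genComp_eq_zero_of_lt {n k : ℕ} (h : n < k) : genComp b n k = 0 := by
  refine sum_eq_zero fun f hf => absurd h (not_lt.2 ?_)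
  rw [mem_filter, Nat.mem_antidiagonalTuple] at hf
  calc k = ∑ _j : Fin k, 1 := by simp
    _ ≤ ∑ j, f j := sum_le_sum fun j _ => hf.2 j
    _ = n := hf.1

theorem genComp_succ_zero (n : ℕ) : genComp b (n + 1) 0 = 0 := by
  simp [genComp, Nat.antidiagonalTuple_zero_succ]

theorem genComp_succ_succ (n k : ℕ) :
    genComp b (n + 1) (k + 1) = ∑ ij ∈ antidiagonal n, b (ij.1 + 1) * genComp b ij.2 k := by
  simp only [genComp, sum_filter, Nat.sum_antidiagonalTuple_succ, Nat.sum_antidiagonal_succ,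
    Fin.forall_fin_succ, Fin.cons_zero, Fin.cons_succ, Fin.prod_univ_succ, lt_irrefl, false_and,
    if_false, sum_const_zero, zero_add, Nat.succ_pos, true_and, mul_sum, mul_ite, mul_zero]

theorem genCompAll_zero : genCompAll b 0 = 1 := by
  simp [genCompAll, genComp, Nat.antidiagonalTuple_zero_zero]

theorem genCompAll_eq_sum_range {n N : ℕ} (h : n ≤ N) :
    genCompAll b n = ∑ k ∈ range (N + 1), genComp b n k :=
  sum_subset (range_subset_range.2 (by omega)) fun _k hkN hkn =>
    genComp_eq_zero_of_lt b (by simp_all)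

theorem genCompAll_succ (n : ℕ) :
    genCompAll b (n + 1) = ∑ ij ∈ antidiagonal n, b (ij.1 + 1) * genCompAll b ij.2 :=
  calc genCompAll b (n + 1) = ∑ k ∈ range (n + 1), genComp b (n + 1) (k + 1) := by
        rw [genCompAll, sum_range_succ', genComp_succ_zero, add_zero]
    _ = ∑ ij ∈ antidiagonal n, b (ij.1 + 1) * ∑ k ∈ range (n + 1), genComp b ij.2 k := by
        simp_rw [genComp_succ_succ, mul_sum]
        exact sum_comm
    _ = _ := sum_congr rfl fun ij hij => by
        rw [genCompAll_eq_sum_range b (HasAntidiagonal.antidiagonal.snd_le hij)]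

theorem genCompAll_succ_succ_of_geometric {p : ℕ} (hb : ∀ i, b (i + 2) = p * b (i + 1)) (n : ℕ) :
    genCompAll b (n + 2) = (b 1 + p) * genCompAll b (n + 1) := by
  rw [genCompAll_succ b (n + 1), Nat.sum_antidiagonal_succ, genCompAll_succ b n]
  simp_rw [hb, mul_assoc, ← mul_sum]
  ring

theorem genCompAll_succ_of_geometric {p : ℕ} (hb : ∀ i, b (i + 2) = p * b (i + 1)) (n : ℕ) :
    genCompAll b (n + 1) = b 1 * (b 1 + p) ^ n := by
  induction n with
  | zero => simp [genCompAll_succ, genCompAll_zero]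
  | succ n ih => rw [genCompAll_succ_succ_of_geometric b hb, ih]; ring

end

theorem genCompAll_pow_general (p : ℕ) (b : ℕ → ℕ) (hb : ∀ i, 1 ≤ i → b i = p ^ (i - 1))
    (n : ℕ) :
    genCompAll b n = (1 + p) ^ (n - 1) := by
  have hb₁ : b 1 = 1 := by simpa using hb 1 le_rfl
  have hgeom : ∀ i, b (i + 2) = p * b (i + 1) := fun i => by
    rw [hb _ (by omega), hb _ (by omega), Nat.add_sub_cancel, ← pow_succ']
    rfl
  cases n with
  | zero => simp [genCompAll_zero]
  | succ n => simpa [hb₁] using genCompAll_succ_of_geometric b hgeom n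

theorem genCompAll_pow (p : ℕ) (hp : 1 ≤ p) (b : ℕ → ℕ) (hb : ∀ i, 1 ≤ i → b i = p ^ (i - 1))
    (n : ℕ) (hn : 1 ≤ n) :
    genCompAll b n = (1 + p) ^ (n - 1) :=
  genCompAll_pow_general p b hb n
end

section
/- Let p be a positive integer and let b_i = binom(p, i-1) for all positive integers i. Then for all integers n, k with 1 ≤ k ≤ n, C^b(n,k) = binom(pk, n-k). -/
/-!
Lowering every part by one turns compositions of `n` into `k` positive parts into weak
compositions of `n - k` into `k` parts, and turns the weights into `b (i + 1) = p.choose i`.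
The resulting sum is the coefficient of `X ^ (n - k)` in `((1 + X) ^ p) ^ k`, i.e. the
`k`-fold Vandermonde convolution, which peels off one part at a time.
-/

open Finset

theorem Finset.Nat.sum_antidiagonalTuple_prod_choose (k : ℕ) (a : Fin k → ℕ) (m : ℕ) :
    ∑ g ∈ Nat.antidiagonalTuple k m, ∏ j, (a j).choose (g j) = (∑ j, a j).choose m := by
  induction k generalizing m with
  | zero => cases m <;> simp
  | succ k ih =>
    rw [Nat.sum_antidiagonalTuple_succ, Fin.sum_univ_succ, Nat.add_choose_eq]
    refine sum_congr rfl fun ij _ => ?_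
    simp only [Fin.prod_univ_succ, Fin.cons_zero, Fin.cons_succ, ← mul_sum, ih]

theorem genComp_eq_sum_antidiagonalTuple_sub (b : ℕ → ℕ) {n k : ℕ} (hkn : k ≤ n) :
    genComp b n k = ∑ g ∈ Nat.antidiagonalTuple k (n - k), ∏ j, b (g j + 1) := by
  have sum_succ (g : Fin k → ℕ) : ∑ j, (g j + 1) = ∑ j, g j + k := by
    simp [sum_add_distrib]
  rw [genComp]
  symm
  refine sum_nbij' (fun g j => g j + 1) (fun f j => f j - 1) ?_ ?_ ?_ ?_ fun _ _ => rfl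
  · intro g hg
    simp only [mem_filter, Nat.mem_antidiagonalTuple] at hg ⊢
    exact ⟨by rw [sum_succ, hg]; omega, fun _ => Nat.succ_pos _⟩
  · intro f hf
    simp only [mem_filter, Nat.mem_antidiagonalTuple] at hf ⊢
    have h : ∑ j, f j = ∑ j, (f j - 1) + k := by
      rw [← sum_succ]
      exact sum_congr rfl fun j _ => (Nat.sub_add_cancel (hf.2 j)).symm
    omega
  · intro g _
    simp
  · intro f hf
    rw [mem_filter] at hf
    funext j
    exact Nat.sub_add_cancel (hf.2 j)

theorem genComp_binom_upper_general (p : ℕ) (b : ℕ → ℕ)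
    (hb : ∀ i, 1 ≤ i → b i = Nat.choose p (i - 1))
    (n k : ℕ) (hkn : k ≤ n) :
    genComp b n k = Nat.choose (p * k) (n - k) := by
  have hb_succ (i : ℕ) : b (i + 1) = p.choose i := hb (i + 1) i.succ_pos
  rw [genComp_eq_sum_antidiagonalTuple_sub b hkn]
  simp only [hb_succ]
  rw [Nat.sum_antidiagonalTuple_prod_choose, sum_const, card_univ, Fintype.card_fin, smul_eq_mul,
    mul_comm]

theorem genComp_binom_upper (p : ℕ) (hp : 1 ≤ p) (b : ℕ → ℕ)
    (hb : ∀ i, 1 ≤ i → b i = Nat.choose p (i - 1))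
    (n k : ℕ) (hk : 1 ≤ k) (hkn : k ≤ n) :
    genComp b n k = Nat.choose (p * k) (n - k) :=
  genComp_binom_upper_general p b hb n k hkn
end

section
/- Let p be a positive integer and let b_i = binom(p, i-1) for all positive integers i. Then for every positive integer n, C^b(n) = ∑_{k=1}^{n} binom(pk, n-k). -/
open Finset

/-! Subtracting `1` from every part identifies compositions of `n` into `k` positive parts with
`k`-tuples of naturals summing to `n - k`, and turns the weight `∏ b (f j)` into
`∏ (p.choose (g j))`. Summed over all such tuples this is `(p * k).choose (n - k)` by iterated
Vandermonde (compare coefficients in `((1 + X) ^ p) ^ k`); the `k = 0` term vanishes as `n ≥ 1`. -/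

namespace Finset.Nat

theorem sum_antidiagonalTuple_succ_s11 {k : ℕ} {M : Type*} [AddCommMonoid M]
    (F : (Fin (k + 1) → ℕ) → M) (n : ℕ) :
    ∑ f ∈ antidiagonalTuple (k + 1) n, F f =
      ∑ p ∈ antidiagonal n, ∑ g ∈ antidiagonalTuple k p.2, F (Fin.cons p.1 g) := by
  rw [sum_sigma']
  refine sum_nbij' (fun f => ⟨(f 0, ∑ j, Fin.tail f j), Fin.tail f⟩)
    (fun x => Fin.cons x.1.1 x.2) ?_ ?_ (fun f _ => Fin.cons_self_tail f) ?_ (fun f _ => by simp)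
  · intro f hf
    simp_all [mem_antidiagonalTuple, Fin.sum_univ_succ, Fin.tail]
  · rintro ⟨⟨a, b⟩, g⟩ hx
    simp_all [mem_antidiagonalTuple, Fin.sum_univ_succ]
  · rintro ⟨⟨a, b⟩, g⟩ hx
    simp_all [mem_antidiagonalTuple]

theorem sum_antidiagonalTuple_prod_choose_s11 {k : ℕ} (c : Fin k → ℕ) (m : ℕ) :
    ∑ f ∈ antidiagonalTuple k m, ∏ j, (c j).choose (f j) = (∑ j, c j).choose m := by
  induction k generalizing m with
  | zero => cases m <;> simp
  | succ k ih =>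
    simp only [sum_antidiagonalTuple_succ_s11, Fin.prod_univ_succ, Fin.cons_zero, Fin.cons_succ,
      ← mul_sum, ih (fun j => c j.succ), Fin.sum_univ_succ, Nat.add_choose_eq]

end Finset.Nat

open Finset.Nat

theorem genComp_add_self_eq_sum_antidiagonalTuple (b : ℕ → ℕ) (m k : ℕ) :
    genComp b (m + k) k = ∑ g ∈ antidiagonalTuple k m, ∏ j, b (g j + 1) := by
  symm
  refine sum_nbij' (· + 1) (· - 1) ?_ ?_ (fun g _ => by simp) ?_ (fun g _ => rfl)
  · intro g hg
    simp_all [mem_antidiagonalTuple, sum_add_distrib]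
  · intro f hf
    rw [mem_filter, mem_antidiagonalTuple] at hf
    have hsum : ∑ j, (f j - 1) + k = m + k :=
      calc ∑ j, (f j - 1) + k = ∑ j, (f j - 1 + 1) := by simp [sum_add_distrib]
        _ = m + k := hf.1 ▸ sum_congr rfl fun j _ => Nat.sub_add_cancel (hf.2 j)
    simpa [mem_antidiagonalTuple] using hsum
  · intro f hf
    funext j
    exact Nat.sub_add_cancel ((mem_filter.1 hf).2 j)

theorem genComp_eq_choose_of_forall_eq_choose {p : ℕ} {b : ℕ → ℕ}
    (hb : ∀ i, 1 ≤ i → b i = p.choose (i - 1)) {n k : ℕ} (hkn : k ≤ n) :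
    genComp b n k = (p * k).choose (n - k) := by
  obtain ⟨m, rfl⟩ := Nat.exists_eq_add_of_le' hkn
  rw [genComp_add_self_eq_sum_antidiagonalTuple, Nat.add_sub_cancel]
  simp only [hb _ (Nat.le_add_left 1 _), Nat.add_sub_cancel, sum_antidiagonalTuple_prod_choose_s11,
    sum_const, card_univ, Fintype.card_fin, smul_eq_mul, mul_comm]

theorem genCompAll_binom_upper_general (p : ℕ) (b : ℕ → ℕ)
    (hb : ∀ i, 1 ≤ i → b i = Nat.choose p (i - 1)) (n : ℕ) (hn : 1 ≤ n) :
    genCompAll b n = ∑ k ∈ Finset.Icc 1 n, Nat.choose (p * k) (n - k) := by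
  have hsum : genCompAll b n = ∑ k ∈ Icc 0 n, (p * k).choose (n - k) :=
    sum_congr (Nat.range_succ_eq_Icc_zero n) fun k hk =>
      genComp_eq_choose_of_forall_eq_choose hb (Finset.mem_Icc.1 hk).2
  rw [hsum, ← insert_Icc_add_one_left_eq_Icc (Nat.zero_le n), sum_insert (by simp)]
  simp [Nat.choose_eq_zero_of_lt hn]

theorem genCompAll_binom_upper (p : ℕ) (hp : 1 ≤ p) (b : ℕ → ℕ)
    (hb : ∀ i, 1 ≤ i → b i = Nat.choose p (i - 1)) (n : ℕ) (hn : 1 ≤ n) :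
    genCompAll b n = ∑ k ∈ Finset.Icc 1 n, Nat.choose (p * k) (n - k) :=
  genCompAll_binom_upper_general p b hb n hn
end

section
/- Let p be a positive integer and let b_i = binom(p+i-1, p) for all positive integers i. Then for all positive integers n and k, C^b(n,k) = binom(n+pk-1, pk+k-1). -/
open Finset

/-!
The generating series of the parts is `∑_{i ≥ 1} C(p+i-1, p) Xⁱ = X / (1 - X)^(p+1)`, so that of
compositions with `k` parts is its `k`-th power `Xᵏ / (1 - X)^((p+1)k)`, whose `n`-th coefficient
is `C(n - k + (p+1)k - 1, (p+1)k - 1) = C(n + pk - 1, pk + k - 1)`.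
-/

open PowerSeries

namespace PowerSeries

theorem coeff_pow_eq_sum_antidiagonalTuple {R : Type*} [CommSemiring R] (φ : R⟦X⟧) (k n : ℕ) :
    coeff n (φ ^ k) = ∑ f ∈ Nat.antidiagonalTuple k n, ∏ j, coeff (f j) φ := by
  rw [← Fin.prod_const, coeff_prod]
  exact sum_equiv Finsupp.equivFunOnFinite
    (fun l => by simp [Nat.mem_antidiagonalTuple]) (fun l _ => rfl)

theorem invOneSubPow_pow {R : Type*} [CommRing R] (d k : ℕ) :
    invOneSubPow R d ^ k = invOneSubPow R (d * k) := by
  simp_rw [invOneSubPow_eq_inv_one_sub_pow, pow_mul]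

end PowerSeries

section

variable (R : Type*)

def partSeries [Semiring R] (b : ℕ → ℕ) : R⟦X⟧ :=
  mk fun i => if i = 0 then 0 else (b i : R)

theorem genComp_eq_coeff_partSeries_pow [CommSemiring R] (b : ℕ → ℕ) (n k : ℕ) :
    (genComp b n k : R) = coeff n (partSeries R b ^ k) := by
  rw [coeff_pow_eq_sum_antidiagonalTuple, genComp, Nat.cast_sum, sum_filter]
  refine sum_congr rfl fun f _ => ?_
  split_ifs with hpos
  · simp [partSeries, fun j => (hpos j).ne']
  · obtain ⟨j, hj⟩ := not_forall.mp hpos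
    exact (prod_eq_zero (mem_univ j) (by simp [partSeries, Nat.le_zero.mp (not_lt.mp hj)])).symm

theorem partSeries_eq_X_mul_invOneSubPow [CommRing R] {p : ℕ} {b : ℕ → ℕ}
    (hb : ∀ i, 1 ≤ i → b i = (p + i - 1).choose p) :
    partSeries R b = X * (invOneSubPow R (p + 1)).val := by
  ext (_ | i)
  · simp [partSeries]
  · rw [coeff_succ_X_mul, invOneSubPow_val_succ_eq_mk_add_choose]
    simp [partSeries, hb (i + 1) (by omega)]

theorem coeff_X_mul_invOneSubPow_pow [CommRing R] (p : ℕ) {n k : ℕ} (hn : 1 ≤ n) (hk : 1 ≤ k) :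
    coeff n ((X * (invOneSubPow R (p + 1)).val) ^ k)
      = ((n + p * k - 1).choose (p * k + k - 1) : R) := by
  have hd : (p + 1) * k = (p * k + k - 1) + 1 := by rw [add_mul, one_mul]; omega
  rw [mul_pow, ← Units.val_pow_eq_pow_val, invOneSubPow_pow, hd,
    invOneSubPow_val_succ_eq_mk_add_choose, coeff_X_pow_mul', coeff_mk]
  split_ifs with hkn
  · congr 2; omega
  · rw [Nat.choose_eq_zero_of_lt (by omega), Nat.cast_zero]

end

theorem genComp_figured_general (p : ℕ) (b : ℕ → ℕ)
    (hb : ∀ i, 1 ≤ i → b i = Nat.choose (p + i - 1) p)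
    (n k : ℕ) (hn : 1 ≤ n) (hk : 1 ≤ k) :
    genComp b n k = Nat.choose (n + p * k - 1) (p * k + k - 1) := by
  apply Nat.cast_injective (R := ℤ)
  rw [genComp_eq_coeff_partSeries_pow, partSeries_eq_X_mul_invOneSubPow ℤ hb,
    coeff_X_mul_invOneSubPow_pow ℤ p hn hk]

theorem genComp_figured (p : ℕ) (hp : 1 ≤ p) (b : ℕ → ℕ)
    (hb : ∀ i, 1 ≤ i → b i = Nat.choose (p + i - 1) p)
    (n k : ℕ) (hn : 1 ≤ n) (hk : 1 ≤ k) :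
    genComp b n k = Nat.choose (n + p * k - 1) (p * k + k - 1) :=
  genComp_figured_general p b hb n k hn hk
end

section
/- Let q be a positive integer and let b_i = binom(i, q) for all positive integers i. Then for all positive integers n and k, C^b(n,k) = binom(n+k-1, qk+k-1). -/
/-!
Since `binom(0, q) = 0`, the positivity condition on the parts may be dropped, and `C^b(n, k)`
becomes the coefficient of `x^n` in `B(x)^k`, where `B(x) = ∑ binom(i, q) x^i = x^q / (1-x)^(q+1)`.
Then `B(x)^k = x^(qk) / (1-x)^((q+1)k)`, whose coefficient of `x^n` is
`binom(n - qk + (q+1)k - 1, (q+1)k - 1) = binom(n + k - 1, qk + k - 1)` for `n ≥ qk`,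
and both sides vanish for `n < qk`.
-/

open Finset

open PowerSeries

theorem PowerSeries.coeff_pow_eq_sum_antidiagonalTuple_s15 {R : Type*} [CommSemiring R]
    (k n : ℕ) (φ : R⟦X⟧) :
    coeff n (φ ^ k) = ∑ f ∈ Nat.antidiagonalTuple k n, ∏ j, coeff (f j) φ := by
  rw [← Fin.prod_const k φ, coeff_prod, ← piAntidiag_univ_fin_eq_antidiagonalTuple,
    finsuppAntidiag, sum_map, ← sum_attach (piAntidiag univ n)]
  rfl

section invOneSubPow

variable {S : Type*} [CommRing S]

theorem PowerSeries.invOneSubPow_val_pow (d k : ℕ) :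
    (invOneSubPow S d).val ^ k = (invOneSubPow S (d * k)).val := by
  rw [← Units.val_pow_eq_pow_val, invOneSubPow_eq_inv_one_sub_pow,
    invOneSubPow_eq_inv_one_sub_pow, pow_mul]

theorem PowerSeries.mk_choose_eq_X_pow_mul_invOneSubPow (q : ℕ) :
    (mk fun i => (i.choose q : S)) = X ^ q * (invOneSubPow S (q + 1)).val := by
  ext n
  rw [invOneSubPow_val_succ_eq_mk_add_choose, coeff_X_pow_mul', coeff_mk]
  split_ifs with h
  · rw [coeff_mk, Nat.add_sub_cancel' h]
  · rw [Nat.choose_eq_zero_of_lt (by omega), Nat.cast_zero]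

theorem PowerSeries.coeff_mk_choose_pow (q n : ℕ) {k : ℕ} (hk : 0 < k) :
    coeff n ((mk fun i => (i.choose q : S)) ^ k) = ((n + k - 1).choose (q * k + k - 1) : S) := by
  rw [mk_choose_eq_X_pow_mul_invOneSubPow, mul_pow, ← pow_mul, invOneSubPow_val_pow,
    invOneSubPow_val_eq_mk_sub_one_add_choose_of_pos _ _ (by positivity), coeff_X_pow_mul',
    coeff_mk]
  split_ifs with h
  · congr 2 <;> grind
  · rw [Nat.choose_eq_zero_of_lt (by grind), Nat.cast_zero]

end invOneSubPow

theorem genComp_congr {b c : ℕ → ℕ} (h : ∀ i, 0 < i → b i = c i) (n k : ℕ) :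
    genComp b n k = genComp c n k :=
  sum_congr rfl fun _ hf => prod_congr rfl fun j _ => h _ ((mem_filter.mp hf).2 j)

theorem genComp_eq_coeff_pow {S : Type*} [CommSemiring S] {b : ℕ → ℕ} (hb : b 0 = 0)
    (n k : ℕ) : (genComp b n k : S) = coeff n ((mk fun i => (b i : S)) ^ k) := by
  have parts_pos : ∀ f ∈ Nat.antidiagonalTuple k n, ∏ j, b (f j) ≠ 0 → ∀ j, 0 < f j :=
    fun _ _ hf j => Nat.pos_of_ne_zero fun hfj => prod_ne_zero_iff.mp hf j (mem_univ j) (hfj ▸ hb)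
  rw [genComp, sum_filter_of_ne parts_pos, coeff_pow_eq_sum_antidiagonalTuple_s15]
  simp only [coeff_mk, Nat.cast_sum, Nat.cast_prod]

theorem genComp_binom_lower_general (q : ℕ) (hq : 1 ≤ q) (b : ℕ → ℕ)
    (hb : ∀ i, 1 ≤ i → b i = Nat.choose i q)
    (n k : ℕ) (hk : 1 ≤ k) :
    genComp b n k = Nat.choose (n + k - 1) (q * k + k - 1) := by
  have hcast : (genComp b n k : ℤ) = (n + k - 1).choose (q * k + k - 1) := by
    rw [genComp_congr hb, genComp_eq_coeff_pow (b := (·.choose q)) (Nat.choose_eq_zero_of_lt hq),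
      coeff_mk_choose_pow q n hk]
  exact_mod_cast hcast

theorem genComp_binom_lower (q : ℕ) (hq : 1 ≤ q) (b : ℕ → ℕ)
    (hb : ∀ i, 1 ≤ i → b i = Nat.choose i q)
    (n k : ℕ) (hn : 1 ≤ n) (hk : 1 ≤ k) :
    genComp b n k = Nat.choose (n + k - 1) (q * k + k - 1) :=
  genComp_binom_lower_general q hq b hb n k hk
end
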